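/- Suppose n = p^s = q^t + 1 for primes p, q and integers s, t ≥ 1. Then the greatest common divisor, over all partitions σ of n with every part at most n - 2, of the multinomial coefficients n!/∏σ_i! equals p·q. -/

import Mathlib

/-- The multinomial coefficient of a partition given as a multiset. -/
def multinom (n : ℕ) (σ : Multiset ℕ) : ℕ :=
  n.factorial / (σ.map Nat.factorial).prod

/-- σ is a partition of n: positive parts summing to n. -/
def IsPartition (n : ℕ) (σ : Multiset ℕ) : Prop :=
  (∀ x ∈ σ, 0 < x) ∧ σ.sum = n

/-- `g` is the gcd of the multinomial coefficients over all partitions of `n`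
with every part at most `n - 2`. -/
def IsGcdOfMultinomials (n g : ℕ) : Prop :=
  (∀ σ : Multiset ℕ, IsPartition n σ → (∀ x ∈ σ, x ≤ n - 2) → g ∣ multinom n σ) ∧
    ∀ d : ℕ, (∀ σ : Multiset ℕ, IsPartition n σ → (∀ x ∈ σ, x ≤ n - 2) → d ∣ multinom n σ) →
      d ∣ g

/-!
By Legendre's formula, for a prime `r` and a partition `σ` of `n`,
`(r - 1) * v_r (multinom n σ) = ∑ᵢ S_r(σᵢ) - S_r(n)`, where `S_r` is the base-`r` digit sum.
For `n = p ^ s` we have `S_p(n) = 1`, while a partition with parts at most `n - 2` has at least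
two parts, each of positive digit sum, so `p` divides every such coefficient. For
`n = q ^ t + 1` we have `S_q(n) = 2`, and the digit sums of the parts add up to at least `3`:
otherwise there would be exactly two parts, both powers of `q` below `q ^ t`, too small to add up
to `n`. Since `p ^ s` and `q ^ t` are coprime, `p * q` divides every coefficient.
Conversely, the partition `(n - 2, 1, 1)` gives `n (n - 1) = p ^ s q ^ t`, while
`(p ^ (s - 1), …, p ^ (s - 1))` and `(q ^ (t - 1), …, q ^ (t - 1), 1)` give coefficients of
`p`-adic, resp. `q`-adic, valuation exactly `1`.
-/

open Nat

section DigitSum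

variable {b : ℕ}

theorem Nat.digits_sum_pos {x : ℕ} (hx : x ≠ 0) : 0 < (b.digits x).sum :=
  (Nat.pos_of_ne_zero (getLast_digit_ne_zero b hx)).trans_le
    (List.le_sum_of_mem (List.getLast_mem _))

theorem Nat.digits_sum_base_pow (hb : 1 < b) (k : ℕ) : (b.digits (b ^ k)).sum = 1 := by
  simpa [digits_of_lt b 1 one_ne_zero hb] using
    congrArg List.sum (digits_base_pow_mul (k := k) hb one_pos)

theorem Nat.digits_sum_base_pow_add_one (hb : 1 < b) {k : ℕ} (hk : k ≠ 0) :
    (b.digits (b ^ k + 1)).sum = 2 := by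
  obtain ⟨k, rfl⟩ := Nat.exists_eq_succ_of_ne_zero hk
  rw [pow_succ', add_comm, digits_add b hb 1 _ hb (Or.inl one_ne_zero), List.sum_cons,
    digits_sum_base_pow hb]

theorem Nat.exists_eq_pow_of_digits_sum_eq_one (hb : 1 < b) {x : ℕ}
    (h : (b.digits x).sum = 1) : ∃ k, x = b ^ k := by
  induction x using Nat.strong_induction_on with
  | _ x ih =>
    have hx : x ≠ 0 := by rintro rfl; simp at h
    rw [digits_def' hb (Nat.pos_of_ne_zero hx), List.sum_cons] at h
    have hdiv := Nat.div_add_mod x b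
    rcases Nat.eq_zero_or_pos (x % b) with hmod | hmod
    · obtain ⟨k, hk⟩ := ih (x / b) (Nat.div_lt_self (Nat.pos_of_ne_zero hx) hb) (by omega)
      exact ⟨k + 1, by rw [pow_succ', ← hk]; omega⟩
    · have hquot : x / b = 0 := by
        by_contra hq
        have := digits_sum_pos (b := b) hq
        omega
      exact ⟨0, by rw [hquot] at hdiv; simp; omega⟩

theorem Nat.three_le_digits_sum_add {k a c : ℕ} (hb : 1 < b) (hac : a + c = b ^ k + 1)
    (ha : a < b ^ k) (hc : c < b ^ k) : 3 ≤ (b.digits a).sum + (b.digits c).sum := by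
  have ha0 := digits_sum_pos (b := b) (x := a) (by omega)
  have hc0 := digits_sum_pos (b := b) (x := c) (by omega)
  by_contra! h
  obtain ⟨i, rfl⟩ := exists_eq_pow_of_digits_sum_eq_one hb (by omega : (b.digits a).sum = 1)
  obtain ⟨j, rfl⟩ := exists_eq_pow_of_digits_sum_eq_one hb (by omega : (b.digits c).sum = 1)
  obtain ⟨k, rfl⟩ : ∃ k', k = k' + 1 :=
    Nat.exists_eq_succ_of_ne_zero (by rintro rfl; simp at ha; omega)
  have hi : b ^ i ≤ b ^ k :=
    pow_le_pow_right₀ hb.le (Nat.lt_succ_iff.mp ((Nat.pow_lt_pow_iff_right hb).mp ha))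
  have hj : b ^ j ≤ b ^ k :=
    pow_le_pow_right₀ hb.le (Nat.lt_succ_iff.mp ((Nat.pow_lt_pow_iff_right hb).mp hc))
  have : 2 * b ^ k ≤ b ^ (k + 1) := by rw [pow_succ']; exact Nat.mul_le_mul_right _ hb
  omega

theorem Multiset.card_le_sum_map_digits_sum {σ : Multiset ℕ} (hσ : ∀ x ∈ σ, 0 < x) :
    card σ ≤ (σ.map fun x => (b.digits x).sum).sum := by
  simpa using sum_map_le_sum_map (fun _ => 1) (fun x => (b.digits x).sum)
    fun x hx => digits_sum_pos (hσ x hx).ne'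

end DigitSum

theorem Multiset.two_le_card_of_forall_le_sub_two {n : ℕ} {σ : Multiset ℕ} (hn : n ≠ 0)
    (hσ : σ.sum = n) (hle : ∀ x ∈ σ, x ≤ n - 2) : 2 ≤ card σ := by
  by_contra! hcard
  rcases (by omega : card σ = 0 ∨ card σ = 1) with h0 | h1
  · simp [card_eq_zero.mp h0] at hσ
    omega
  · obtain ⟨a, rfl⟩ := card_eq_one.mp h1
    simp at hσ hle
    omega

theorem Multiset.prod_map_factorial_dvd_factorial_sum (σ : Multiset ℕ) :
    (σ.map (·!)).prod ∣ σ.sum ! := by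
  induction σ using Multiset.induction with
  | empty => simp
  | cons a σ ih =>
    rw [map_cons, prod_cons, sum_cons]
    exact (mul_dvd_mul_left _ ih).trans (factorial_mul_factorial_dvd_factorial_add a σ.sum)

theorem multinom_mul_prod_map_factorial {n : ℕ} {σ : Multiset ℕ} (hσ : σ.sum = n) :
    multinom n σ * (σ.map (·!)).prod = n ! :=
  Nat.div_mul_cancel (hσ ▸ σ.prod_map_factorial_dvd_factorial_sum)

theorem multinom_ne_zero {n : ℕ} {σ : Multiset ℕ} (hσ : σ.sum = n) : multinom n σ ≠ 0 :=
  left_ne_zero_of_mul (multinom_mul_prod_map_factorial hσ ▸ factorial_ne_zero n)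

theorem multinom_add_two_one_one (m : ℕ) :
    multinom (m + 2) {m, 1, 1} = (m + 2) * (m + 1) := by
  simp [multinom, factorial_succ, ← mul_assoc, Nat.mul_div_cancel _ (factorial_pos m)]

/-- `IsGcdOfMultinomials n g` unfolds to
`DvdMultinomials n g ∧ ∀ d, DvdMultinomials n d → d ∣ g`. -/
def DvdMultinomials (n d : ℕ) : Prop :=
  ∀ σ : Multiset ℕ, IsPartition n σ → (∀ x ∈ σ, x ≤ n - 2) → d ∣ multinom n σ

theorem DvdMultinomials.dvd_mul_sub_one {n d : ℕ} (hn : 3 ≤ n) (hd : DvdMultinomials n d) :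
    d ∣ n * (n - 1) := by
  obtain ⟨m, rfl⟩ := Nat.exists_eq_add_of_le' (by omega : 2 ≤ n)
  have hσ : ({m, 1, 1} : Multiset ℕ).sum = m + 2 := by simp
  have := hd {m, 1, 1} ⟨by simp; omega, hσ⟩ (by simp; omega)
  rwa [multinom_add_two_one_one] at this

section Legendre

variable {r : ℕ} [Fact r.Prime]

theorem sub_one_mul_padicValNat_prod_map_factorial_add (σ : Multiset ℕ) :
    (r - 1) * padicValNat r (σ.map (·!)).prod + (σ.map fun x => (r.digits x).sum).sum =
      σ.sum := by
  induction σ using Multiset.induction with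
  | empty => simp
  | cons a σ ih =>
    have ha := sub_one_mul_padicValNat_factorial (p := r) a
    have hle := digit_sum_le r a
    rw [Multiset.map_cons, Multiset.prod_cons, padicValNat.mul (factorial_ne_zero a)
      (Multiset.prod_ne_zero (by simp [factorial_ne_zero])), Multiset.map_cons,
      Multiset.sum_cons, Multiset.sum_cons, mul_add]
    omega

theorem sub_one_mul_padicValNat_multinom_add {n : ℕ} {σ : Multiset ℕ} (hσ : σ.sum = n) :
    (r - 1) * padicValNat r (multinom n σ) + (r.digits n).sum =
      (σ.map fun x => (r.digits x).sum).sum := by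
  have hprod := sub_one_mul_padicValNat_prod_map_factorial_add (r := r) σ
  have hn := sub_one_mul_padicValNat_factorial (p := r) n
  have hle := digit_sum_le r n
  rw [← multinom_mul_prod_map_factorial hσ, padicValNat.mul (multinom_ne_zero hσ)
    (Multiset.prod_ne_zero (by simp [factorial_ne_zero])), mul_add] at hn
  omega

theorem dvd_multinom_of_digits_sum_lt {n : ℕ} {σ : Multiset ℕ} (hσ : σ.sum = n)
    (h : (r.digits n).sum < (σ.map fun x => (r.digits x).sum).sum) : r ∣ multinom n σ := by
  have := sub_one_mul_padicValNat_multinom_add (r := r) hσ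
  refine dvd_of_one_le_padicValNat (Nat.one_le_iff_ne_zero.mpr fun h0 => ?_)
  rw [h0] at this
  omega

theorem padicValNat_multinom_eq_one {n : ℕ} {σ : Multiset ℕ} (hσ : σ.sum = n)
    (h : (σ.map fun x => (r.digits x).sum).sum = (r.digits n).sum + (r - 1)) :
    padicValNat r (multinom n σ) = 1 := by
  have := sub_one_mul_padicValNat_multinom_add (r := r) hσ
  have hr : 0 < r - 1 := Nat.sub_pos_of_lt (Fact.out : r.Prime).one_lt
  exact Nat.eq_of_mul_eq_mul_left hr (by omega)

theorem not_sq_dvd_of_dvd_of_padicValNat_eq_one {m d : ℕ} (hm : m ≠ 0)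
    (hv : padicValNat r m = 1) (hd : d ∣ m) : ¬ r ^ 2 ∣ d := fun h => by
  have := (padicValNat_dvd_iff_le hm).mp (h.trans hd)
  omega

theorem dvdMultinomials_pow (k : ℕ) : DvdMultinomials (r ^ k) r := by
  rintro σ ⟨hpos, hσ⟩ hle
  have hr := (Fact.out : r.Prime).one_lt
  have hcard := σ.two_le_card_of_forall_le_sub_two (pow_pos (by omega) k).ne' hσ hle
  have := σ.card_le_sum_map_digits_sum (b := r) hpos
  exact dvd_multinom_of_digits_sum_lt hσ (by rw [digits_sum_base_pow hr]; omega)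

theorem dvdMultinomials_pow_add_one {k : ℕ} (hk : k ≠ 0) : DvdMultinomials (r ^ k + 1) r := by
  rintro σ ⟨hpos, hσ⟩ hle
  have hr := (Fact.out : r.Prime).one_lt
  refine dvd_multinom_of_digits_sum_lt hσ ?_
  rw [digits_sum_base_pow_add_one hr hk]
  have hcard := σ.two_le_card_of_forall_le_sub_two (by omega) hσ hle
  rcases hcard.eq_or_lt with hcard | hcard
  · obtain ⟨a, c, rfl⟩ := Multiset.card_eq_two.mp hcard.symm
    simp only [Multiset.insert_eq_cons, Multiset.mem_cons, Multiset.mem_singleton,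
      forall_eq_or_imp, forall_eq, Multiset.sum_cons, Multiset.sum_singleton,
      Multiset.map_cons, Multiset.map_singleton] at hle hσ ⊢
    have := three_le_digits_sum_add hr hσ (by omega) (by omega)
    omega
  · have := σ.card_le_sum_map_digits_sum (b := r) hpos
    omega

theorem not_sq_dvd_of_dvdMultinomials_pow_succ {k d : ℕ} (hn : 3 ≤ r ^ (k + 1))
    (hd : DvdMultinomials (r ^ (k + 1)) d) : ¬ r ^ 2 ∣ d := by
  have hr := (Fact.out : r.Prime).one_lt
  have hσ : (Multiset.replicate r (r ^ k)).sum = r ^ (k + 1) := by simp [pow_succ']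
  refine not_sq_dvd_of_dvd_of_padicValNat_eq_one (multinom_ne_zero hσ)
    (padicValNat_multinom_eq_one hσ ?_) (hd _ ⟨?_, hσ⟩ ?_)
  · simp [digits_sum_base_pow hr]
    omega
  · intro x hx
    rw [Multiset.eq_of_mem_replicate hx]
    positivity
  · intro x hx
    rw [Multiset.eq_of_mem_replicate hx]
    have : 2 * r ^ k ≤ r ^ (k + 1) := by rw [pow_succ']; exact Nat.mul_le_mul_right _ hr
    have := Nat.one_le_pow k r (by omega)
    omega

theorem not_sq_dvd_of_dvdMultinomials_pow_succ_add_one {k d : ℕ}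
    (hd : DvdMultinomials (r ^ (k + 1) + 1) d) : ¬ r ^ 2 ∣ d := by
  have hr := (Fact.out : r.Prime).one_lt
  have hσ : (1 ::ₘ Multiset.replicate r (r ^ k)).sum = r ^ (k + 1) + 1 := by
    simp [pow_succ']
    omega
  refine not_sq_dvd_of_dvd_of_padicValNat_eq_one (multinom_ne_zero hσ)
    (padicValNat_multinom_eq_one hσ ?_) (hd _ ⟨?_, hσ⟩ ?_)
  · simp [digits_of_lt r 1 one_ne_zero hr, digits_sum_base_pow hr,
      digits_sum_base_pow_add_one hr k.add_one_ne_zero]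
    omega
  · simp only [Multiset.mem_cons, Multiset.mem_replicate]
    rintro x (rfl | ⟨-, rfl⟩) <;> positivity
  · intro x hx
    have : r ^ k < r ^ (k + 1) := Nat.pow_lt_pow_succ hr
    have := Nat.one_le_pow k r (by omega)
    rcases Multiset.mem_cons.mp hx with rfl | hx
    · omega
    · rw [Multiset.eq_of_mem_replicate hx]
      omega

end Legendre

theorem Nat.dvd_mul_of_dvd_pow_mul_pow {p q s t d : ℕ} (hp : p.Prime) (hq : q.Prime)
    (hd : d ∣ p ^ s * q ^ t) (hpd : ¬ p ^ 2 ∣ d) (hqd : ¬ q ^ 2 ∣ d) : d ∣ p * q := by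
  obtain ⟨d₁, d₂, hd₁, hd₂, rfl⟩ := Nat.dvd_mul.mp hd
  obtain ⟨i, -, rfl⟩ := (Nat.dvd_prime_pow hp).mp hd₁
  obtain ⟨j, -, rfl⟩ := (Nat.dvd_prime_pow hq).mp hd₂
  have hi : i ≤ 1 := by
    by_contra! hi
    exact hpd (Dvd.dvd.mul_right (pow_dvd_pow p hi) _)
  have hj : j ≤ 1 := by
    by_contra! hj
    exact hqd (Dvd.dvd.mul_left (pow_dvd_pow q hj) _)
  exact mul_dvd_mul ((pow_dvd_pow p hi).trans (pow_one p).dvd)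
    ((pow_dvd_pow q hj).trans (pow_one q).dvd)

theorem gcd_multinomials_both (p q s t : ℕ) (hp : p.Prime) (hq : q.Prime)
    (hs : 1 ≤ s) (ht : 1 ≤ t) (h : p ^ s = q ^ t + 1) :
    IsGcdOfMultinomials (p ^ s) (p * q) := by
  have := Fact.mk hp
  have := Fact.mk hq
  obtain ⟨s, rfl⟩ := Nat.exists_eq_add_of_le' hs
  obtain ⟨t, rfl⟩ := Nat.exists_eq_add_of_le' ht
  have hcop : Nat.Coprime p q := by
    rw [← coprime_pow_left_iff s.add_one_pos, ← coprime_pow_right_iff t.add_one_pos, h]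
    exact coprime_self_add_left.mpr (coprime_one_left _)
  have hn : 3 ≤ p ^ (s + 1) := by
    have := Nat.one_lt_pow t.add_one_ne_zero hq.one_lt
    omega
  refine ⟨fun σ hσ hle => ?_, fun d hd => ?_⟩
  · have hqDvd : DvdMultinomials (p ^ (s + 1)) q :=
      h ▸ dvdMultinomials_pow_add_one t.add_one_ne_zero
    exact hcop.mul_dvd_of_dvd_of_dvd (dvdMultinomials_pow _ σ hσ hle) (hqDvd σ hσ hle)
  · refine Nat.dvd_mul_of_dvd_pow_mul_pow hp hq (s := s + 1) (t := t + 1) ?_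
      (not_sq_dvd_of_dvdMultinomials_pow_succ hn hd)
      (not_sq_dvd_of_dvdMultinomials_pow_succ_add_one (h ▸ hd))
    simpa [h] using DvdMultinomials.dvd_mul_sub_one hn hd
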